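/- Let Σ and Σ′ be partial winning strategies for the game G(T,η). Then Σ+Σ′, defined by (Σ+Σ′)(φ,s) = Σ(φ,s) if (φ,s) ∈ dom(Σ) and Σ′(φ,s) otherwise, is a partial winning strategy, and dom(Σ+Σ′) = dom(Σ) ∪ dom(Σ′). -/

import Mathlib

set_option maxHeartbeats 1000000

namespace MuCalc

attribute [local instance] Classical.propDecidable

/-- μ-calculus formulas. -/
inductive Formula (Var : Type*) (Prp : Type*) (Act : Type*) where
  | var : Var → Formula Var Prp Act
  | prop : Prp → Formula Var Prp Act
  | dia : Act → Formula Var Prp Act → Formula Var Prp Act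
  | box : Act → Formula Var Prp Act → Formula Var Prp Act
  | and : Formula Var Prp Act → Formula Var Prp Act → Formula Var Prp Act
  | or : Formula Var Prp Act → Formula Var Prp Act → Formula Var Prp Act
  | mu : Var → Formula Var Prp Act → Formula Var Prp Act
  | nu : Var → Formula Var Prp Act → Formula Var Prp Act

namespace Formula

variable {Var Prp Act : Type*}

/-- Free variables. -/
noncomputable def FV : Formula Var Prp Act → Finset Var
  | var X => {X}
  | prop _ => ∅
  | dia _ φ => FV φ
  | box _ φ => FV φ
  | and φ ψ => FV φ ∪ FV ψ
  | or φ ψ => FV φ ∪ FV ψ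
  | mu X φ => FV φ \ {X}
  | nu X φ => FV φ \ {X}

/-- Substitution of a formula for the free occurrences of a variable. -/
noncomputable def subst : Formula Var Prp Act → Var → Formula Var Prp Act → Formula Var Prp Act
  | var Y, X, ρ => if Y = X then ρ else var Y
  | prop P, _, _ => prop P
  | dia a φ, X, ρ => dia a (subst φ X ρ)
  | box a φ, X, ρ => box a (subst φ X ρ)
  | and φ ψ, X, ρ => and (subst φ X ρ) (subst ψ X ρ)
  | or φ ψ, X, ρ => or (subst φ X ρ) (subst ψ X ρ)
  | mu Y φ, X, ρ => if Y = X then mu Y φ else mu Y (subst φ X ρ)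
  | nu Y φ, X, ρ => if Y = X then nu Y φ else nu Y (subst φ X ρ)

/-- Nesting depth `nd(X, φ)` of a variable in a formula. -/
noncomputable def ndVar (X : Var) : Formula Var Prp Act → ℕ
  | var _ => 0
  | prop _ => 0
  | dia _ φ => ndVar X φ
  | box _ φ => ndVar X φ
  | and φ ψ => max (ndVar X φ) (ndVar X ψ)
  | or φ ψ => max (ndVar X φ) (ndVar X ψ)
  | mu Y φ => if X ≠ Y ∧ X ∈ FV φ then max (1 + ndVar Y φ) (ndVar X φ) else 0
  | nu Y φ => if X ≠ Y ∧ X ∈ FV φ then max (1 + ndVar Y φ) (ndVar X φ) else 0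

/-- Nesting depth `nd(φ)` of a formula: `nd(QX.φ) = 1 + nd(X,φ)` and `0` otherwise. -/
noncomputable def nd : Formula Var Prp Act → ℕ
  | mu X φ => 1 + ndVar X φ
  | nu X φ => 1 + ndVar X φ
  | _ => 0

/-- The dual of a formula. -/
def dual : Formula Var Prp Act → Formula Var Prp Act
  | var X => var X
  | prop P => prop P
  | dia a φ => box a (dual φ)
  | box a φ => dia a (dual φ)
  | and φ ψ => or (dual φ) (dual ψ)
  | or φ ψ => and (dual φ) (dual ψ)
  | mu X φ => nu X (dual φ)
  | nu X φ => mu X (dual φ)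

/-- A fixpoint formula `QX.φ` with `Q ∈ {μ, ν}`: `fp true = μ`, `fp false = ν`. -/
def fp (q : Bool) (X : Var) (φ : Formula Var Prp Act) : Formula Var Prp Act :=
  if q then mu X φ else nu X φ

/-- The (reflexive, transitive) subformula relation. -/
inductive Subformula : Formula Var Prp Act → Formula Var Prp Act → Prop
  | refl (φ) : Subformula φ φ
  | dia {ρ φ} (a : Act) : Subformula ρ φ → Subformula ρ (dia a φ)
  | box {ρ φ} (a : Act) : Subformula ρ φ → Subformula ρ (box a φ)
  | and_left {ρ φ ψ} : Subformula ρ φ → Subformula ρ (and φ ψ)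
  | and_right {ρ φ ψ} : Subformula ρ ψ → Subformula ρ (and φ ψ)
  | or_left {ρ φ ψ} : Subformula ρ φ → Subformula ρ (or φ ψ)
  | or_right {ρ φ ψ} : Subformula ρ ψ → Subformula ρ (or φ ψ)
  | mu {ρ φ} (X : Var) : Subformula ρ φ → Subformula ρ (mu X φ)
  | nu {ρ φ} (X : Var) : Subformula ρ φ → Subformula ρ (nu X φ)

end Formula

/-- A labelled transition system: a family of total transition relations and
a labelling of states with the atomic propositions true there. -/
structure LTS (S : Type*) (Prp : Type*) (Act : Type*) where
  trans : Act → S → S → Prop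
  total : ∀ a s, ∃ t, trans a s t
  label : S → Set Prp

variable {S Var Prp Act : Type*}

/-- The semantics `⟦φ⟧η ⊆ S`, with least/greatest fixpoints given by Knaster–Tarski. -/
noncomputable def LTS.sem (T : LTS S Prp Act) :
    Formula Var Prp Act → (Var → Set S) → Set S
  | .var X, η => η X
  | .prop P, _ => {s | P ∈ T.label s}
  | .dia a φ, η => {s | ∃ t, T.trans a s t ∧ t ∈ T.sem φ η}
  | .box a φ, η => {s | ∀ t, T.trans a s t → t ∈ T.sem φ η}
  | .and φ ψ, η => T.sem φ η ∩ T.sem ψ η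
  | .or φ ψ, η => T.sem φ η ∪ T.sem ψ η
  | .mu X φ, η => sInf {U : Set S | T.sem φ (Function.update η X U) ⊆ U}
  | .nu X φ, η => sSup {U : Set S | U ⊆ T.sem φ (Function.update η X U)}

/-- A parity game: positions owned by Player 0 and Player 1, a total edge
relation, and a priority function. -/
structure ParityGame (Pos : Type*) where
  owner : Pos → Fin 2
  edge : Pos → Pos → Prop
  total : ∀ p, ∃ q, edge p q
  priority : Pos → ℕ

namespace ParityGame

variable {Pos : Type*}

/-- A strategy for player `i`: given the history (the earlier positions of the
play, in order) and the current position, pick a move; all prescribed moves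
must follow edges when the current position belongs to player `i`. -/
structure Strategy (G : ParityGame Pos) (i : Fin 2) where
  move : List Pos → Pos → Pos
  valid : ∀ h p, G.owner p = i → G.edge p (move h p)

/-- A strategy is positional if its moves only depend on the current position. -/
def Strategy.Positional {G : ParityGame Pos} {i : Fin 2} (σ : G.Strategy i) : Prop :=
  ∀ h h' p, σ.move h p = σ.move h' p

/-- The play determined by a joint move function `f` (history, current ↦ next):
current position together with the history. -/
def playHist (f : List Pos → Pos → Pos) (p : Pos) : ℕ → Pos × List Pos
  | 0 => (p, [])
  | n + 1 =>
    let q := playHist f p n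
    (f q.2 q.1, q.2 ++ [q.1])

/-- The infinite play determined by a joint move function. -/
def play (f : List Pos → Pos → Pos) (p : Pos) (n : ℕ) : Pos :=
  (playHist f p n).1

/-- The joint move function of a strategy for player `i` and a counterstrategy. -/
def Strategy.combine {G : ParityGame Pos} {i : Fin 2} (σ : G.Strategy i)
    (τ : G.Strategy (1 - i)) : List Pos → Pos → Pos :=
  fun h p => if G.owner p = i then σ.move h p else τ.move h p

/-- An infinite sequence of positions is a play if successive positions follow edges. -/
def IsPlay (G : ParityGame Pos) (f : ℕ → Pos) : Prop :=
  ∀ n, G.edge (f n) (f (n + 1))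

/-- The largest priority occurring infinitely often in an infinite play. -/
noncomputable def maxInfPriority (G : ParityGame Pos) (f : ℕ → Pos) : ℕ :=
  sSup {k | {n | G.priority (f n) = k}.Infinite}

/-- Player `i` wins the infinite play `f`: the largest priority occurring
infinitely often has parity `i`. -/
def WinsPlaySeq (G : ParityGame Pos) (i : Fin 2) (f : ℕ → Pos) : Prop :=
  G.maxInfPriority f % 2 = i.val

/-- `σ` (for player `i`) wins the play from `p` against counterstrategy `τ`. -/
def Strategy.WinsAgainst {G : ParityGame Pos} {i : Fin 2} (σ : G.Strategy i)
    (τ : G.Strategy (1 - i)) (p : Pos) : Prop :=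
  G.WinsPlaySeq i (play (σ.combine τ) p)

/-- `σ` is a winning strategy for player `i` from position `p`. -/
def Strategy.WinsFrom {G : ParityGame Pos} {i : Fin 2} (σ : G.Strategy i) (p : Pos) : Prop :=
  ∀ τ : G.Strategy (1 - i), σ.WinsAgainst τ p

/-- Player `i` wins from position `p`. -/
def WinsFrom (G : ParityGame Pos) (i : Fin 2) (p : Pos) : Prop :=
  ∃ σ : G.Strategy i, σ.WinsFrom p

end ParityGame

/-- Ownership of positions in the game `G(T,η)`: opponent (Player 1) moves at
conjunctions and boxes, proponent (Player 0) everywhere else. -/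
def gameOwner : S × Formula Var Prp Act → Fin 2
  | (_, .and _ _) => 1
  | (_, .box _ _) => 1
  | _ => 0

/-- The moves of the game `G(T,η)`. -/
noncomputable def gameMove (T : LTS S Prp Act) :
    S × Formula Var Prp Act → S × Formula Var Prp Act → Prop
  | (s, .or φ ψ), q => q = (s, φ) ∨ q = (s, ψ)
  | (s, .and φ ψ), q => q = (s, φ) ∨ q = (s, ψ)
  | (s, .dia a φ), q => q.2 = φ ∧ T.trans a s q.1
  | (s, .box a φ), q => q.2 = φ ∧ T.trans a s q.1
  | (s, .mu X φ), q => q = (s, Formula.subst φ X (.mu X φ))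
  | (s, .nu X φ), q => q = (s, Formula.subst φ X (.nu X φ))
  | (s, .var X), q => q = (s, .var X)
  | (s, .prop P), q => q = (s, .prop P)

/-- The priorities of the game `G(T,η)`. -/
noncomputable def gamePriority (T : LTS S Prp Act) (η : Var → Set S) :
    S × Formula Var Prp Act → ℕ
  | (_, .mu X φ) => 2 * Formula.nd (Formula.mu X φ) + 1
  | (_, .nu X φ) => 2 * Formula.nd (Formula.nu X φ)
  | (s, .prop P) => if P ∈ T.label s then 0 else 1
  | (s, .var X) => if s ∈ η X then 0 else 1
  | (_, _) => 0

/-- The parity game `G(T,η)` associated with an LTS `T` and environment `η`. -/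
noncomputable def LTS.game (T : LTS S Prp Act) (η : Var → Set S) :
    ParityGame (S × Formula Var Prp Act) where
  owner := gameOwner
  edge := gameMove T
  total := by
    rintro ⟨s, φ⟩
    cases φ with
    | var X => exact ⟨(s, .var X), rfl⟩
    | prop P => exact ⟨(s, .prop P), rfl⟩
    | dia a φ => obtain ⟨t, ht⟩ := T.total a s; exact ⟨(t, φ), rfl, ht⟩
    | box a φ => obtain ⟨t, ht⟩ := T.total a s; exact ⟨(t, φ), rfl, ht⟩
    | and φ ψ => exact ⟨(s, φ), Or.inl rfl⟩
    | or φ ψ => exact ⟨(s, φ), Or.inl rfl⟩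
    | mu X φ => exact ⟨(s, Formula.subst φ X (.mu X φ)), rfl⟩
    | nu X φ => exact ⟨(s, Formula.subst φ X (.nu X φ)), rfl⟩
  priority := gamePriority T η

/-- The advice values `{1, 2, *} ∪ S` of a partial winning strategy. -/
inductive Advice (S : Type*) where
  | one : Advice S
  | two : Advice S
  | star : Advice S
  | state : S → Advice S

/-- A partial strategy: a partial function from positions of `G(T,η)` to advice. -/
def PStrat (S Var Prp Act : Type*) :=
  S × Formula Var Prp Act → Option (Advice S)

/-- The domain of a partial strategy. -/
def PStrat.dom (sg : PStrat S Var Prp Act) : Set (S × Formula Var Prp Act) :=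
  {q | sg q ≠ none}

/-- The move function of the Player-0 strategy induced by a partial strategy:
follow the advice where present (and sensible), move arbitrarily elsewhere. -/
noncomputable def inducedMove (T : LTS S Prp Act) (sg : PStrat S Var Prp Act) :
    S × Formula Var Prp Act → S × Formula Var Prp Act
  | (s, .var X) => (s, .var X)
  | (s, .prop P) => (s, .prop P)
  | (s, .and φ ψ) => (s, φ)
  | (s, .or φ ψ) => if sg (s, .or φ ψ) = some .two then (s, ψ) else (s, φ)
  | (s, .box a φ) => ((T.total a s).choose, φ)
  | (s, .dia a φ) =>
    if h : ∃ t, sg (s, .dia a φ) = some (.state t) ∧ T.trans a s t then (h.choose, φ)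
    else ((T.total a s).choose, φ)
  | (s, .mu X φ) => (s, Formula.subst φ X (.mu X φ))
  | (s, .nu X φ) => (s, Formula.subst φ X (.nu X φ))

/-- The Player-0 strategy induced by a partial strategy. -/
noncomputable def inducedStrategy (T : LTS S Prp Act) (η : Var → Set S)
    (sg : PStrat S Var Prp Act) : (T.game η).Strategy 0 where
  move := fun _ p => inducedMove T sg p
  valid := by
    rintro h ⟨s, φ⟩ _
    show gameMove T (s, φ) (inducedMove T sg (s, φ))
    cases φ with
    | var X => exact rfl
    | prop P => exact rfl
    | and φ ψ => exact Or.inl rfl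
    | or φ ψ =>
      show inducedMove T sg (s, .or φ ψ) = (s, φ) ∨ inducedMove T sg (s, .or φ ψ) = (s, ψ)
      rw [inducedMove]
      split
      · exact Or.inr rfl
      · exact Or.inl rfl
    | box a φ => exact ⟨rfl, (T.total a s).choose_spec⟩
    | dia a φ =>
      show (inducedMove T sg (s, .dia a φ)).2 = φ ∧ T.trans a s (inducedMove T sg (s, .dia a φ)).1
      rw [inducedMove]
      split
      next hh => exact ⟨rfl, hh.choose_spec.2⟩
      next => exact ⟨rfl, (T.total a s).choose_spec⟩
    | mu X φ => exact rfl
    | nu X φ => exact rfl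

/-- A partial winning strategy for the game `G(T,η)` (conditions STAR, OR, DIA, WIN). -/
structure IsPWS (T : LTS S Prp Act) (η : Var → Set S) (sg : PStrat S Var Prp Act) : Prop where
  star : ∀ s (φ : Formula Var Prp Act), sg (s, φ) = some .star →
    ∀ q, gameMove T (s, φ) q → sg q ≠ none
  or_one : ∀ s (φ : Formula Var Prp Act), sg (s, φ) = some .one →
    ∃ φ₁ φ₂, φ = Formula.or φ₁ φ₂ ∧ sg (s, φ₁) ≠ none
  or_two : ∀ s (φ : Formula Var Prp Act), sg (s, φ) = some .two →
    ∃ φ₁ φ₂, φ = Formula.or φ₁ φ₂ ∧ sg (s, φ₂) ≠ none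
  dia : ∀ s (φ : Formula Var Prp Act) t, sg (s, φ) = some (.state t) →
    ∃ a ψ, φ = Formula.dia a ψ ∧ T.trans a s t ∧ sg (t, ψ) ≠ none
  win : ∀ q ∈ PStrat.dom sg, (inducedStrategy T η sg).WinsFrom q

/-- The sum `Σ + Σ'` of two partial strategies, preferring the left one. -/
def pwsAdd (sg sg' : PStrat S Var Prp Act) : PStrat S Var Prp Act :=
  fun q => (sg q).orElse (fun _ => sg' q)

/-- The substitution-composition `Σ[X:=φ, Σ']` of partial strategies. -/
noncomputable def pwsSubst (sg : PStrat S Var Prp Act) (X : Var)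
    (φ : Formula Var Prp Act) (sg' : PStrat S Var Prp Act) : PStrat S Var Prp Act :=
  fun q =>
    (sg' q).orElse (fun _ =>
      if h : ∃ ψ, q.2 = Formula.subst ψ X φ ∧ sg (q.1, ψ) ≠ none
      then sg (q.1, h.choose) else none)

/-- The instrumented fixpoint iteration `SEM(φ)_η`, computing a partial
winning strategy by fixpoint iteration. -/
noncomputable def SEM [Fintype S] (T : LTS S Prp Act) :
    Formula Var Prp Act → (Var → Set S) → PStrat S Var Prp Act
  | .var X, η => fun q => if q.2 = Formula.var X ∧ q.1 ∈ η X then some .star else none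
  | .prop P, _ => fun q => if q.2 = Formula.prop P ∧ P ∈ T.label q.1 then some .star else none
  | .and φ ψ, η =>
    pwsAdd (SEM T φ η) (pwsAdd (SEM T ψ η)
      (fun q => if q.2 = Formula.and φ ψ ∧ SEM T φ η (q.1, φ) ≠ none ∧ SEM T ψ η (q.1, ψ) ≠ none
        then some .star else none))
  | .or φ ψ, η =>
    pwsAdd (SEM T φ η) (pwsAdd (SEM T ψ η) (pwsAdd
      (fun q => if q.2 = Formula.or φ ψ ∧ SEM T φ η (q.1, φ) ≠ none then some .one else none)
      (fun q => if q.2 = Formula.or φ ψ ∧ SEM T ψ η (q.1, ψ) ≠ none then some .two else none)))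
  | .box a φ, η =>
    pwsAdd (SEM T φ η)
      (fun q => if q.2 = Formula.box a φ ∧ ∀ t, T.trans a q.1 t → SEM T φ η (t, φ) ≠ none
        then some .star else none)
  | .dia a φ, η =>
    pwsAdd (SEM T φ η)
      (fun q =>
        if h : q.2 = Formula.dia a φ ∧ ∃ t, T.trans a q.1 t ∧ SEM T φ η (t, φ) ≠ none
        then some (.state h.2.choose) else none)
  | .mu X φ, η =>
    (fun sgn : PStrat S Var Prp Act =>
        pwsSubst (SEM T φ (Function.update η X {s | sgn (s, φ) ≠ none}))
          X (Formula.mu X φ) sgn)^[Fintype.card S + 1]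
      (fun _ => none)
  | .nu X φ, η =>
    let U := T.sem (Formula.nu X φ) η
    let sg := SEM T φ (Function.update η X U)
    fun q =>
      if q.2 = Formula.nu X φ ∧ q.1 ∈ U then some .star
      else if h : ∃ ψ, ψ ≠ Formula.var X ∧ q.2 = Formula.subst ψ X (Formula.nu X φ) ∧
          sg (q.1, ψ) ≠ none
      then sg (q.1, h.choose) else none


/-! A play following `Σ + Σ'` either enters `dom Σ` at some point or never does. The domain of a
partial winning strategy is a trap for the opponent when Player 0 follows its advice, so in the
first case the play is, from that point on, a play of `Σ`, and the parity condition ignores the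
finite prefix. In the second case `Σ + Σ'` agrees with `Σ'` everywhere along the play, which is
therefore a play of `Σ'` from the start. -/

namespace ParityGame

variable {Pos : Type*}

theorem playHist_add {f : List Pos → Pos → Pos} {p q : Pos} {pre : List Pos} {m : ℕ}
    (hm : playHist f p m = (q, pre)) (n : ℕ) :
    playHist f p (m + n) = Prod.map id (pre ++ ·) (playHist (fun h => f (pre ++ h)) q n) := by
  induction n with
  | zero => simpa [playHist] using hm
  | succ n ih =>
    rw [← add_assoc, playHist, ih, playHist]
    simp

theorem play_add (f : List Pos → Pos → Pos) (p : Pos) (m n : ℕ) :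
    play f p (m + n) = play (fun h => f ((playHist f p m).2 ++ h)) (play f p m) n := by
  simp [play, playHist_add (Prod.mk.eta (p := playHist f p m)).symm]

theorem playHist_congr {f g : List Pos → Pos → Pos} {p : Pos}
    (hfg : ∀ n, f (playHist f p n).2 (playHist f p n).1 = g (playHist f p n).2 (playHist f p n).1)
    (n : ℕ) : playHist f p n = playHist g p n := by
  induction n with
  | zero => rfl
  | succ n ih => simp only [playHist]; rw [← ih, hfg]

theorem play_congr {f g : List Pos → Pos → Pos} {p : Pos}
    (hfg : ∀ n, f (playHist f p n).2 (playHist f p n).1 = g (playHist f p n).2 (playHist f p n).1) :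
    play f p = play g p :=
  funext fun n => congrArg Prod.fst (playHist_congr hfg n)

theorem maxInfPriority_comp_add (G : ParityGame Pos) (f : ℕ → Pos) (m : ℕ) :
    G.maxInfPriority (fun n => f (m + n)) = G.maxInfPriority f := by
  unfold maxInfPriority
  congr 1
  ext k
  simp only [Set.mem_ofPred_eq, ← Nat.frequently_atTop_iff_infinite]
  conv_rhs => rw [← Filter.map_add_atTop_eq_nat m, Filter.frequently_map]
  simp only [add_comm]

theorem winsPlaySeq_comp_add_iff (G : ParityGame Pos) (i : Fin 2) (f : ℕ → Pos) (m : ℕ) :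
    G.WinsPlaySeq i (fun n => f (m + n)) ↔ G.WinsPlaySeq i f := by
  rw [WinsPlaySeq, WinsPlaySeq, maxInfPriority_comp_add]

def Strategy.afterHistory {G : ParityGame Pos} {i : Fin 2} (τ : G.Strategy i) (pre : List Pos) :
    G.Strategy i where
  move h p := τ.move (pre ++ h) p
  valid h p := τ.valid (pre ++ h) p

theorem Strategy.play_combine_add {G : ParityGame Pos} {i : Fin 2} {σ : G.Strategy i}
    (hσ : σ.Positional) (τ : G.Strategy (1 - i)) (p : Pos) (m n : ℕ) :
    play (σ.combine τ) p (m + n) =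
      play (σ.combine (τ.afterHistory (playHist (σ.combine τ) p m).2))
        (play (σ.combine τ) p m) n := by
  rw [play_add]
  congr 1
  funext h r
  simp only [Strategy.combine, Strategy.afterHistory]
  split_ifs
  · exact hσ _ _ r
  · rfl

end ParityGame

open ParityGame

variable {T : LTS S Prp Act} {η : Var → Set S} {sg sg' : PStrat S Var Prp Act}
  {q : S × Formula Var Prp Act}

theorem pwsAdd_apply_of_mem_dom (hq : q ∈ PStrat.dom sg) : pwsAdd sg sg' q = sg q := by
  obtain ⟨a, ha⟩ := Option.ne_none_iff_exists'.mp hq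
  simp [pwsAdd, ha]

theorem pwsAdd_apply_of_notMem_dom (hq : q ∉ PStrat.dom sg) : pwsAdd sg sg' q = sg' q := by
  simp_all [pwsAdd, PStrat.dom]

theorem mem_dom_pwsAdd : q ∈ PStrat.dom (pwsAdd sg sg') ↔ q ∈ PStrat.dom sg ∨ q ∈ PStrat.dom sg' := by
  cases h : sg q <;> simp [PStrat.dom, pwsAdd, h]

theorem pwsAdd_eq_some {a : Advice S} (ha : pwsAdd sg sg' q = some a) :
    sg q = some a ∨ sg' q = some a := by
  cases h : sg q <;> simp_all [pwsAdd]

theorem inducedMove_congr (T : LTS S Prp Act) (h : sg q = sg' q) :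
    inducedMove T sg q = inducedMove T sg' q := by
  obtain ⟨s, φ⟩ := q
  cases φ <;> first | rfl | (simp only [inducedMove]; rw [h])

theorem inducedStrategy_positional (T : LTS S Prp Act) (η : Var → Set S)
    (sg : PStrat S Var Prp Act) : (inducedStrategy T η sg).Positional :=
  fun _ _ _ => rfl

theorem combine_inducedStrategy_congr (τ : (T.game η).Strategy (1 - 0))
    (hist : List (S × Formula Var Prp Act)) (h : sg q = sg' q) :
    (inducedStrategy T η sg).combine τ hist q = (inducedStrategy T η sg').combine τ hist q := by
  simp only [Strategy.combine, inducedStrategy, inducedMove_congr T h]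

namespace IsPWS

theorem inducedMove_mem_dom (h : IsPWS T η sg) (hq : q ∈ PStrat.dom sg) (hown : gameOwner q = 0) :
    inducedMove T sg q ∈ PStrat.dom sg := by
  obtain ⟨s, φ⟩ := q
  obtain ⟨a, ha⟩ := Option.ne_none_iff_exists'.mp hq
  cases a with
  | star => exact h.star s φ ha _ ((inducedStrategy T η sg).valid [] (s, φ) hown)
  | one =>
    obtain ⟨φ₁, φ₂, rfl, hd⟩ := h.or_one s φ ha
    simpa [inducedMove, ha, PStrat.dom] using hd
  | two =>
    obtain ⟨φ₁, φ₂, rfl, hd⟩ := h.or_two s φ ha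
    simpa [inducedMove, ha, PStrat.dom] using hd
  | state t =>
    obtain ⟨b, ψ, rfl, htr, hd⟩ := h.dia s φ t ha
    have hchoice : ∃ t', sg (s, .dia b ψ) = some (.state t') ∧ T.trans b s t' := ⟨t, ha, htr⟩
    have hchosen : hchoice.choose = t := by simpa [ha] using hchoice.choose_spec.1.symm
    simpa [inducedMove, dif_pos hchoice, hchosen, PStrat.dom] using hd

theorem mem_dom_of_gameMove (h : IsPWS T η sg) (hq : q ∈ PStrat.dom sg) (hown : gameOwner q ≠ 0)
    {r : S × Formula Var Prp Act} (hr : gameMove T q r) : r ∈ PStrat.dom sg := by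
  obtain ⟨s, φ⟩ := q
  obtain ⟨a, ha⟩ := Option.ne_none_iff_exists'.mp hq
  cases a with
  | star => exact h.star s φ ha r hr
  | one => obtain ⟨_, _, rfl, -⟩ := h.or_one s φ ha; exact absurd rfl hown
  | two => obtain ⟨_, _, rfl, -⟩ := h.or_two s φ ha; exact absurd rfl hown
  | state t => obtain ⟨_, _, rfl, -⟩ := h.dia s φ t ha; exact absurd rfl hown

theorem combine_mem_dom (h : IsPWS T η sg) (τ : (T.game η).Strategy (1 - 0))
    (hist : List (S × Formula Var Prp Act)) (hq : q ∈ PStrat.dom sg) :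
    (inducedStrategy T η sg).combine τ hist q ∈ PStrat.dom sg := by
  unfold Strategy.combine
  split_ifs with hown
  · exact h.inducedMove_mem_dom hq hown
  · exact h.mem_dom_of_gameMove hq hown (τ.valid hist q (by omega))

theorem play_mem_dom (h : IsPWS T η sg) (τ : (T.game η).Strategy (1 - 0))
    (hq : q ∈ PStrat.dom sg) (n : ℕ) :
    play ((inducedStrategy T η sg).combine τ) q n ∈ PStrat.dom sg := by
  induction n with
  | zero => exact hq
  | succ n ih => exact h.combine_mem_dom τ _ ih

theorem winsAgainst_pwsAdd_of_play_mem_dom (h : IsPWS T η sg) (τ : (T.game η).Strategy (1 - 0))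
    {m : ℕ} (hm : play ((inducedStrategy T η (pwsAdd sg sg')).combine τ) q m ∈ PStrat.dom sg) :
    (inducedStrategy T η (pwsAdd sg sg')).WinsAgainst τ q := by
  set f := (inducedStrategy T η (pwsAdd sg sg')).combine τ
  set τ' := τ.afterHistory (playHist f q m).2
  have hsuffix : (fun n => play f q (m + n)) =
      play ((inducedStrategy T η sg).combine τ') (play f q m) := by
    funext n
    rw [Strategy.play_combine_add (inducedStrategy_positional T η _)]
    refine congrFun (play_congr fun k => ?_).symm n
    exact (combine_inducedStrategy_congr τ' _
      (pwsAdd_apply_of_mem_dom (h.play_mem_dom τ' hm k))).symm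
  rw [Strategy.WinsAgainst, ← winsPlaySeq_comp_add_iff _ _ _ m, hsuffix]
  exact h.win _ hm τ'

theorem winsAgainst_pwsAdd_of_forall_play_notMem_dom (h' : IsPWS T η sg')
    (τ : (T.game η).Strategy (1 - 0)) (hq : q ∈ PStrat.dom sg')
    (hout : ∀ n, play ((inducedStrategy T η (pwsAdd sg sg')).combine τ) q n ∉ PStrat.dom sg) :
    (inducedStrategy T η (pwsAdd sg sg')).WinsAgainst τ q := by
  rw [Strategy.WinsAgainst,
    play_congr fun n => combine_inducedStrategy_congr τ _ (pwsAdd_apply_of_notMem_dom (hout n))]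
  exact h'.win q hq τ

theorem winsFrom_pwsAdd (h : IsPWS T η sg) (h' : IsPWS T η sg')
    (hq : q ∈ PStrat.dom (pwsAdd sg sg')) : (inducedStrategy T η (pwsAdd sg sg')).WinsFrom q := by
  intro τ
  by_cases hhit : ∃ m, play ((inducedStrategy T η (pwsAdd sg sg')).combine τ) q m ∈ PStrat.dom sg
  · obtain ⟨m, hm⟩ := hhit
    exact h.winsAgainst_pwsAdd_of_play_mem_dom τ hm
  · simp only [not_exists] at hhit
    have hq' : q ∈ PStrat.dom sg' := (mem_dom_pwsAdd.mp hq).resolve_left (hhit 0)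
    exact h'.winsAgainst_pwsAdd_of_forall_play_notMem_dom τ hq' hhit

end IsPWS

/-- the sum `Σ + Σ'` of two partial winning strategies is a partial
winning strategy with `dom(Σ+Σ') = dom(Σ) ∪ dom(Σ')`. -/
theorem pwsAdd_isPWS {S Var Prp Act : Type*} (T : LTS S Prp Act) (η : Var → Set S)
    (sg sg' : PStrat S Var Prp Act) (h : IsPWS T η sg) (h' : IsPWS T η sg') :
    IsPWS T η (pwsAdd sg sg') ∧
      PStrat.dom (pwsAdd sg sg') = PStrat.dom sg ∪ PStrat.dom sg' := by
  have dom_left {r} (hr : r ∈ PStrat.dom sg) : r ∈ PStrat.dom (pwsAdd sg sg') :=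
    mem_dom_pwsAdd.mpr (.inl hr)
  have dom_right {r} (hr : r ∈ PStrat.dom sg') : r ∈ PStrat.dom (pwsAdd sg sg') :=
    mem_dom_pwsAdd.mpr (.inr hr)
  refine ⟨⟨?star, ?or_one, ?or_two, ?dia, fun q hq => h.winsFrom_pwsAdd h' hq⟩,
    Set.ext fun _ => mem_dom_pwsAdd⟩
  case star =>
    intro s φ ha r hr
    rcases pwsAdd_eq_some ha with ha | ha
    exacts [dom_left (h.star s φ ha r hr), dom_right (h'.star s φ ha r hr)]
  case or_one =>
    intro s φ ha
    rcases pwsAdd_eq_some ha with ha | ha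
    · obtain ⟨φ₁, φ₂, rfl, hd⟩ := h.or_one s φ ha; exact ⟨φ₁, φ₂, rfl, dom_left hd⟩
    · obtain ⟨φ₁, φ₂, rfl, hd⟩ := h'.or_one s φ ha; exact ⟨φ₁, φ₂, rfl, dom_right hd⟩
  case or_two =>
    intro s φ ha
    rcases pwsAdd_eq_some ha with ha | ha
    · obtain ⟨φ₁, φ₂, rfl, hd⟩ := h.or_two s φ ha; exact ⟨φ₁, φ₂, rfl, dom_left hd⟩
    · obtain ⟨φ₁, φ₂, rfl, hd⟩ := h'.or_two s φ ha; exact ⟨φ₁, φ₂, rfl, dom_right hd⟩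
  case dia =>
    intro s φ t ha
    rcases pwsAdd_eq_some ha with ha | ha
    · obtain ⟨a, ψ, rfl, htr, hd⟩ := h.dia s φ t ha; exact ⟨a, ψ, rfl, htr, dom_left hd⟩
    · obtain ⟨a, ψ, rfl, htr, hd⟩ := h'.dia s φ t ha; exact ⟨a, ψ, rfl, htr, dom_right hd⟩

end MuCalc
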